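/- arXiv:1907.00484 — 4 statements merged into one kernel-verified Lean document; each statement's English description precedes it below -/
import Mathlib

section
/- Let X₁, …, X_k be mutually independent Bernoulli random variables taking values in {0, 1}, and let z' ∈ (0, 1) and β > 1. If Var[1 + ∑ X_i] ≤ (E[1 + ∑ X_i])², then E[(1 + ∑ X_i)^{z'}] ≥ (1/(β² + 1))·(1 − 1/β)^{z'}·(E[1 + ∑ X_i])^{z'}. -/
/-!
Cantelli's inequality with `t = E[Y] / β`, together with `Var[Y] ≤ E[Y]²`, shows that
`Y ≥ (1 - 1/β) E[Y]` with probability at least `1 / (β² + 1)`; Markov's inequality for `Y ^ z'`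
on that event gives the bound.
-/

open MeasureTheory ProbabilityTheory

namespace ProbabilityTheory

variable {Ω : Type*} [MeasurableSpace Ω] {μ : Measure Ω} [IsProbabilityMeasure μ]
  {X : Ω → ℝ}

lemma integral_sq_const_sub_add (hX : MemLp X 2 μ) (u : ℝ) :
    ∫ ω, (μ[X] - X ω + u) ^ 2 ∂μ = Var[X; μ] + u ^ 2 := by
  have hX1 : Integrable X μ := hX.integrable one_le_two
  have hW : MemLp (fun ω => μ[X] - X ω + u) 2 μ := ((memLp_const _).sub hX).add (memLp_const u)
  have hmean : μ[fun ω => μ[X] - X ω + u] = u := by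
    rw [integral_add (f := fun ω => μ[X] - X ω) ((integrable_const _).sub hX1)
      (integrable_const u), integral_sub (integrable_const _) hX1]
    simp
  have hvar : Var[fun ω => μ[X] - X ω + u; μ] = Var[X; μ] := by
    rw [variance_add_const (X := fun ω => μ[X] - X ω) (by fun_prop) u, variance_const_sub hX.1]
  have := variance_eq_sub hW
  simp only [hmean, hvar, Pi.pow_apply] at this
  linarith

/-- **Cantelli's inequality** (one-sided Chebyshev inequality). -/
theorem measureReal_lt_sub_le_variance_div (hX : MemLp X 2 μ) {t : ℝ} (ht : 0 < t) :
    μ.real {ω | X ω < μ[X] - t} ≤ Var[X; μ] / (Var[X; μ] + t ^ 2) := by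
  have hV : 0 ≤ Var[X; μ] := variance_nonneg X μ
  -- Markov's inequality for `(μ[X] - X + u) ^ 2`, with the optimal shift `u = Var[X] / t`
  set u := Var[X; μ] / t with hu
  have hsub : {ω | X ω < μ[X] - t} ⊆ {ω | (t + u) ^ 2 ≤ (μ[X] - X ω + u) ^ 2} := by
    intro ω (hω : X ω < μ[X] - t)
    have : t + u ≤ μ[X] - X ω + u := by linarith
    exact pow_le_pow_left₀ (by positivity) this 2
  have hW : MemLp (fun ω => μ[X] - X ω + u) 2 μ := ((memLp_const _).sub hX).add (memLp_const u)
  have hmarkov := mul_meas_ge_le_integral_of_nonneg (Filter.Eventually.of_forall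
    fun ω => sq_nonneg (μ[X] - X ω + u)) hW.integrable_sq ((t + u) ^ 2)
  rw [integral_sq_const_sub_add hX] at hmarkov
  calc μ.real {ω | X ω < μ[X] - t}
      ≤ μ.real {ω | (t + u) ^ 2 ≤ (μ[X] - X ω + u) ^ 2} := measureReal_mono hsub
    _ ≤ (Var[X; μ] + u ^ 2) / (t + u) ^ 2 := by rw [le_div_iff₀ (by positivity)]; linarith
    _ = Var[X; μ] / (Var[X; μ] + t ^ 2) := by rw [hu]; field_simp; ring

theorem one_div_sq_add_one_le_measureReal_of_variance_le_sq (hX : MemLp X 2 μ)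
    (hvar : Var[X; μ] ≤ μ[X] ^ 2) (hpos : 0 < μ[X]) {β : ℝ} (hβ : 0 < β) :
    1 / (β ^ 2 + 1) ≤ μ.real {ω | (1 - 1 / β) * μ[X] ≤ X ω} := by
  have hlower := measureReal_lt_sub_le_variance_div hX (div_pos hpos hβ)
  have hV : 0 ≤ Var[X; μ] := variance_nonneg X μ
  have hbound : Var[X; μ] / (Var[X; μ] + (μ[X] / β) ^ 2) ≤ β ^ 2 / (β ^ 2 + 1) := by
    have hscale : β ^ 2 * (μ[X] / β) ^ 2 = μ[X] ^ 2 := by field_simp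
    rw [div_le_div_iff₀ (by positivity) (by positivity)]
    nlinarith
  have hcover : 1 ≤ μ.real {ω | X ω < μ[X] - μ[X] / β} +
      μ.real {ω | (1 - 1 / β) * μ[X] ≤ X ω} := by
    calc (1 : ℝ) = μ.real Set.univ := by simp
      _ ≤ μ.real ({ω | X ω < μ[X] - μ[X] / β} ∪
            {ω | (1 - 1 / β) * μ[X] ≤ X ω}) := by
          refine measureReal_mono fun ω _ => ?_
          rcases lt_or_ge (X ω) (μ[X] - μ[X] / β) with h | h
          · exact Or.inl h
          · exact Or.inr (by rwa [one_sub_mul, one_div_mul_eq_div])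
      _ ≤ _ := measureReal_union_le _ _
  have hsplit : 1 - β ^ 2 / (β ^ 2 + 1) = 1 / (β ^ 2 + 1) := by field_simp; ring
  linarith

theorem le_integral_rpow_of_variance_le_sq (hX0 : 0 ≤ᵐ[μ] X) (hX : MemLp X 2 μ)
    (hvar : Var[X; μ] ≤ μ[X] ^ 2) (hpos : 0 < μ[X]) {β : ℝ} (hβ : 1 ≤ β) {z : ℝ}
    (hz : 0 ≤ z) (hint : Integrable (fun ω => X ω ^ z) μ) :
    1 / (β ^ 2 + 1) * (1 - 1 / β) ^ z * μ[X] ^ z ≤ ∫ ω, X ω ^ z ∂μ := by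
  set c := (1 - 1 / β) * μ[X]
  have hβ' : 0 ≤ 1 - 1 / β := sub_nonneg.2 (div_le_one_of_le₀ hβ (by linarith))
  have hc : 0 ≤ c := mul_nonneg hβ' hpos.le
  have hsub : {ω | c ≤ X ω} ⊆ {ω | c ^ z ≤ X ω ^ z} :=
    fun ω h => Real.rpow_le_rpow hc h hz
  calc 1 / (β ^ 2 + 1) * (1 - 1 / β) ^ z * μ[X] ^ z = c ^ z * (1 / (β ^ 2 + 1)) := by
        rw [Real.mul_rpow hβ' hpos.le]; ring
    _ ≤ c ^ z * μ.real {ω | c ≤ X ω} := by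
        gcongr
        exact one_div_sq_add_one_le_measureReal_of_variance_le_sq hX hvar hpos (by linarith)
    _ ≤ c ^ z * μ.real {ω | c ^ z ≤ X ω ^ z} :=
        mul_le_mul_of_nonneg_left (measureReal_mono hsub) (Real.rpow_nonneg hc z)
    _ ≤ ∫ ω, X ω ^ z ∂μ :=
        mul_meas_ge_le_integral_of_nonneg (hX0.mono fun ω h => Real.rpow_nonneg h z) hint _

end ProbabilityTheory

lemma Finset.sum_mem_Icc_of_forall_eq_zero_or_eq_one {ι : Type*} (s : Finset ι) {x : ι → ℝ}
    (hx : ∀ i, x i = 0 ∨ x i = 1) : 0 ≤ ∑ i ∈ s, x i ∧ ∑ i ∈ s, x i ≤ s.card := by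
  refine ⟨s.sum_nonneg fun i _ => ?_, ?_⟩
  · rcases hx i with h | h <;> simp [h]
  · simpa using s.sum_le_card_nsmul x 1 fun i _ => by rcases hx i with h | h <;> simp [h]

theorem stmt6_general {Ω : Type*} [MeasurableSpace Ω] (μ : Measure Ω) [IsProbabilityMeasure μ]
    {k : ℕ} (X : Fin k → Ω → ℝ) (hmeas : ∀ i, Measurable (X i))
    (hBer : ∀ i ω, X i ω = 0 ∨ X i ω = 1)
    (z' β : ℝ) (hz0 : 0 < z') (hβ : 1 < β)
    (Y : Ω → ℝ) (hY : Y = fun ω => 1 + ∑ i, X i ω)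
    (hvar : variance Y μ ≤ (∫ ω, Y ω ∂μ) ^ 2) :
    (1 / (β ^ 2 + 1)) * (1 - 1 / β) ^ z' * (∫ ω, Y ω ∂μ) ^ z'
      ≤ ∫ ω, (Y ω) ^ z' ∂μ := by
  have hYmeas : Measurable Y :=
    hY ▸ measurable_const.add (Finset.measurable_sum _ fun i _ => hmeas i)
  have hbounds : ∀ ω, 1 ≤ Y ω ∧ Y ω ≤ 1 + k := fun ω => by
    obtain ⟨h0, hk⟩ := Finset.univ.sum_mem_Icc_of_forall_eq_zero_or_eq_one (hBer · ω)
    simp only [hY, Finset.card_univ, Fintype.card_fin] at hk ⊢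
    constructor <;> linarith
  have hY0 : ∀ ω, 0 ≤ Y ω := fun ω => zero_le_one.trans (hbounds ω).1
  have hL2 : MemLp Y 2 μ :=
    .of_bound hYmeas.aestronglyMeasurable (1 + k) <| ae_of_all _ fun ω => by
      rw [Real.norm_of_nonneg (hY0 ω)]; exact (hbounds ω).2
  have hint : Integrable (fun ω => Y ω ^ z') μ :=
    .of_bound (hYmeas.pow_const z').aestronglyMeasurable ((1 + k) ^ z') <| ae_of_all _ fun ω => by
      rw [Real.norm_of_nonneg (Real.rpow_nonneg (hY0 ω) _)]
      exact Real.rpow_le_rpow (hY0 ω) (hbounds ω).2 hz0.le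
  have hpos : 0 < ∫ ω, Y ω ∂μ := one_pos.trans_le <| by
    simpa using integral_mono (integrable_const 1) (hL2.integrable one_le_two) (hbounds · |>.1)
  exact le_integral_rpow_of_variance_le_sq (ae_of_all _ hY0) hL2 hvar hpos hβ.le hz0.le hint

theorem stmt6 {Ω : Type*} [MeasurableSpace Ω] (μ : Measure Ω) [IsProbabilityMeasure μ]
    {k : ℕ} (X : Fin k → Ω → ℝ) (hmeas : ∀ i, Measurable (X i))
    (hindep : iIndepFun X μ)
    (hBer : ∀ i ω, X i ω = 0 ∨ X i ω = 1)
    (z' β : ℝ) (hz0 : 0 < z') (hz1 : z' < 1) (hβ : 1 < β)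
    (Y : Ω → ℝ) (hY : Y = fun ω => 1 + ∑ i, X i ω)
    (hvar : variance Y μ ≤ (∫ ω, Y ω ∂μ) ^ 2) :
    (1 / (β ^ 2 + 1)) * (1 - 1 / β) ^ z' * (∫ ω, Y ω ∂μ) ^ z'
      ≤ ∫ ω, (Y ω) ^ z' ∂μ :=
  stmt6_general μ X hmeas hBer z' β hz0 hβ Y hY hvar
end

section
/- Let α ≥ 1 be real and suppose μ' > 0 and λ' = max_{x > 0} ((x + 1)^{α − 1} − μ'·x^{α}) is finite. Then for all reals x, y ≥ 0: y·(x + y)^{α − 1} ≤ λ'·y^{α} + μ'·x^{α}. -/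
theorem stmt11 (α : ℝ) (hα : 1 ≤ α) (μ' lam : ℝ) (hμ' : 0 < μ')
    (hlam : IsGreatest ((fun x : ℝ => (x + 1) ^ (α - 1) - μ' * x ^ α) '' Set.Ioi 0) lam) :
    ∀ x y : ℝ, 0 ≤ x → 0 ≤ y →
      y * (x + y) ^ (α - 1) ≤ lam * y ^ α + μ' * x ^ α := by
  have hub : ∀ t : ℝ, 0 < t → (t + 1) ^ (α - 1) - μ' * t ^ α ≤ lam := by
    intro t ht
    exact hlam.2 ⟨t, ht, rfl⟩
  -- lam ≥ 1
  have hlam1 : 1 ≤ lam := by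
    by_contra h
    push_neg at h
    set t : ℝ := min 1 ((1 - lam) / (2 * μ')) with htdef
    have ht0 : 0 < t := lt_min one_pos (div_pos (by linarith) (by positivity))
    have ht1 : t ≤ 1 := min_le_left _ _
    have h1 : (1:ℝ) ≤ (t + 1) ^ (α - 1) :=
      Real.one_le_rpow (by linarith) (by linarith)
    have h2 : t ^ α ≤ t := by
      calc t ^ α ≤ t ^ (1:ℝ) :=
            Real.rpow_le_rpow_of_exponent_ge ht0 ht1 hα
        _ = t := Real.rpow_one t
    have h3 : t ≤ (1 - lam) / (2 * μ') := min_le_right _ _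
    have h4 := hub t ht0
    have h5 : μ' * t ^ α ≤ μ' * ((1 - lam) / (2 * μ')) :=
      mul_le_mul_of_nonneg_left (h2.trans h3) hμ'.le
    have h6 : μ' * ((1 - lam) / (2 * μ')) = (1 - lam) / 2 := by
      field_simp
    linarith
  intro x y hx hy
  rcases eq_or_lt_of_le hy with hy0 | hy'
  · -- y = 0
    rw [← hy0]
    have : (0:ℝ) ^ α = 0 := Real.zero_rpow (by linarith)
    rw [this]
    have : (0:ℝ) ≤ μ' * x ^ α := by positivity
    linarith [this]
  · -- y > 0
    have hyα : (0:ℝ) < y ^ α := Real.rpow_pos_of_pos hy' _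
    have hyα1 : (0:ℝ) < y ^ (α - 1) := Real.rpow_pos_of_pos hy' _
    have ey : y ^ α = y ^ (α - 1) * y := by
      rw [← Real.rpow_add_one hy'.ne' (α - 1)]
      norm_num
    rcases eq_or_lt_of_le hx with hx0 | hx'
    · -- x = 0
      rw [← hx0]
      have h0 : (0:ℝ) ^ α = 0 := Real.zero_rpow (by linarith)
      rw [h0, zero_add]
      have : y * y ^ (α - 1) = y ^ α := by rw [ey]; ring
      rw [this]
      nlinarith
    · -- x > 0
      set t : ℝ := x / y with htdef
      have ht0 : 0 < t := div_pos hx' hy'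
      have key := hub t ht0
      have h1 : t + 1 = (x + y) / y := by rw [htdef]; field_simp
      have h2 : (t + 1) ^ (α - 1) = (x + y) ^ (α - 1) / y ^ (α - 1) := by
        rw [h1, Real.div_rpow (by linarith) hy'.le]
      have h3 : t ^ α = x ^ α / y ^ α := by
        rw [htdef, Real.div_rpow hx hy'.le]
      rw [h2, h3] at key
      have key2 := mul_le_mul_of_nonneg_right key hyα.le
      -- ((x+y)^(α-1)/y^(α-1) - μ' * (x^α/y^α)) * y^α ≤ lam * y^α
      have e1 : ((x + y) ^ (α - 1) / y ^ (α - 1) - μ' * (x ^ α / y ^ α)) * y ^ α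
          = y * (x + y) ^ (α - 1) - μ' * x ^ α := by
        rw [ey]; field_simp
      rw [e1] at key2
      linarith
end

section
/- Let α > 1 be real, let γ > 0 be the unique positive root of (x + 1)^{α − 1} = x^{α}, and let c ≥ 1. Then h(c·γ) < (α − 1)/(α·c), where h(x) = ((α − 1)(x + 1)^{α − 2})/(α·x^{α − 1}). -/
theorem stmt13 (α : ℝ) (hα : 1 < α) (γ : ℝ) (hγ : 0 < γ)
    (hroot : (γ + 1) ^ (α - 1) = γ ^ α) (c : ℝ) (hc : 1 ≤ c) :
    ((α - 1) * (c * γ + 1) ^ (α - 2)) / (α * (c * γ) ^ (α - 1)) < (α - 1) / (α * c) := by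
  have hγ1 : (0:ℝ) < γ + 1 := by linarith
  have hc0 : (0:ℝ) < c := by linarith
  have hx : (0:ℝ) < c * γ := mul_pos hc0 hγ
  have hx1 : (0:ℝ) < c * γ + 1 := by linarith
  have hα0 : (0:ℝ) < α := by linarith
  have key : c * (c * γ + 1) ^ (α - 2) < (c * γ) ^ (α - 1) := by
    have h1 : (c * γ + 1) ^ (α - 1) ≤ (c * (γ + 1)) ^ (α - 1) :=
      Real.rpow_le_rpow hx1.le (by nlinarith) (by linarith)
    have h2 : (c * (γ + 1)) ^ (α - 1) = c ^ (α - 1) * (γ + 1) ^ (α - 1) :=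
      Real.mul_rpow hc0.le hγ1.le
    have h3 : γ ^ α = γ ^ (α - 1) * γ := by
      rw [← Real.rpow_add_one hγ.ne' (α - 1)]; ring_nf
    have h4 : (c * γ) ^ (α - 1) = c ^ (α - 1) * γ ^ (α - 1) :=
      Real.mul_rpow hc0.le hγ.le
    have h5 : (c * γ + 1) ^ (α - 1) ≤ (c * γ) ^ (α - 1) * γ := by
      rw [h2, hroot, h3] at h1
      rw [h4]
      nlinarith [h1]
    have h6 : (c * γ + 1) ^ (α - 2) = (c * γ + 1) ^ (α - 1) / (c * γ + 1) := by
      rw [← Real.rpow_sub_one hx1.ne']; ring_nf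
    have hp : (0:ℝ) < (c * γ) ^ (α - 1) := Real.rpow_pos_of_pos hx _
    calc c * (c * γ + 1) ^ (α - 2)
        = c * ((c * γ + 1) ^ (α - 1) / (c * γ + 1)) := by rw [h6]
      _ ≤ c * ((c * γ) ^ (α - 1) * γ / (c * γ + 1)) := by gcongr
      _ = (c * γ) ^ (α - 1) * ((c * γ) / (c * γ + 1)) := by ring
      _ < (c * γ) ^ (α - 1) * 1 := by
          gcongr
          rw [div_lt_one hx1]; linarith
      _ = (c * γ) ^ (α - 1) := mul_one _
  have hp : (0:ℝ) < (c * γ) ^ (α - 1) := Real.rpow_pos_of_pos hx _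
  rw [div_lt_div_iff₀ (by positivity) (by positivity)]
  nlinarith [key, mul_pos hα0 (sub_pos.mpr hα)]
end

section
/- With the definitions of the previous statement (loads, costs, and Rosenthal potential Φ), for every action profile a: Φ(a) ≤ ∑_{e ∈ E} ∑_j ξ_{e,j}·(l_e^a)^{α_j} ≤ ⌈α_max⌉·Φ(a), where α_max = max_j α_j. -/
/-- The load of resource `e` under action profile `b`. -/
def bgndLoad {E : Type*} [Fintype E] [DecidableEq E] {N : ℕ}
    (b : Fin N → Finset E) (e : E) : ℕ :=
  (Finset.univ.filter fun i => e ∈ b i).card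

/-- The Rosenthal potential. -/
noncomputable def bgndPotential {E : Type*} [Fintype E] [DecidableEq E] {N q : ℕ}
    (α : Fin q → ℝ) (ξ : E → Fin q → ℝ) (b : Fin N → Finset E) : ℝ :=
  ∑ e, ∑ l ∈ Finset.Icc 1 (bgndLoad b e), ∑ j, ξ e j * (l : ℝ) ^ (α j - 1)

/-! Each resource is treated separately. The lower bound compares every summand `l ^ (α - 1)`
with `L ^ (α - 1)`. The upper bound telescopes Bernoulli's inequality
`L ^ α - (L - 1) ^ α ≤ α L ^ (α - 1)` over `L` and uses `α ≤ ⌈α_max⌉`. -/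

open Finset

lemma rpow_sub_rpow_sub_one_le {p x : ℝ} (hp : 1 ≤ p) (hx : 1 ≤ x) :
    x ^ p - (x - 1) ^ p ≤ p * x ^ (p - 1) := by
  have hx0 : 0 < x := by linarith
  have hbern : 1 + p * -x⁻¹ ≤ (1 + -x⁻¹) ^ p :=
    one_add_mul_self_le_rpow_one_add (by linarith [inv_le_one_of_one_le₀ hx]) hp
  have hfactor : (x - 1) ^ p = x ^ p * (1 + -x⁻¹) ^ p := by
    rw [← Real.mul_rpow hx0.le (by linarith [inv_le_one_of_one_le₀ hx])]
    field_simp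
    ring_nf
  have hpow : x ^ (p - 1) = x ^ p * x⁻¹ := by
    rw [Real.rpow_sub_one hx0.ne', div_eq_mul_inv]
  rw [hfactor, hpow]
  nlinarith [Real.rpow_pos_of_pos hx0 p]

lemma sum_Icc_rpow_sub_one_le {p : ℝ} (hp : 1 ≤ p) (L : ℕ) :
    ∑ l ∈ Icc 1 L, (l : ℝ) ^ (p - 1) ≤ (L : ℝ) ^ p := by
  calc ∑ l ∈ Icc 1 L, (l : ℝ) ^ (p - 1)
      ≤ ∑ _l ∈ Icc 1 L, (L : ℝ) ^ (p - 1) := by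
        refine sum_le_sum fun l hl => ?_
        exact Real.rpow_le_rpow (by positivity) (by exact_mod_cast (mem_Icc.1 hl).2) (by linarith)
    _ = (L : ℝ) * (L : ℝ) ^ (p - 1) := by simp
    _ = (L : ℝ) ^ p := by
        rw [← Real.rpow_one_add' (Nat.cast_nonneg L) (by linarith)]
        ring_nf

lemma rpow_le_mul_sum_Icc_rpow_sub_one {p c : ℝ} (hp : 1 ≤ p) (hc : p ≤ c) (L : ℕ) :
    (L : ℝ) ^ p ≤ c * ∑ l ∈ Icc 1 L, (l : ℝ) ^ (p - 1) := by
  induction L with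
  | zero => simp [Real.zero_rpow (by linarith : p ≠ 0)]
  | succ L ih =>
    have hstep := rpow_sub_rpow_sub_one_le hp (x := (L + 1 : ℕ)) (by simp)
    have hle : p * ((L + 1 : ℕ) : ℝ) ^ (p - 1) ≤ c * ((L + 1 : ℕ) : ℝ) ^ (p - 1) :=
      mul_le_mul_of_nonneg_right hc (by positivity)
    rw [sum_Icc_succ_top (by omega), mul_add]
    push_cast at hstep hle ⊢
    rw [add_sub_cancel_right] at hstep
    linarith

section Resource

variable {ι : Type*} [Fintype ι] {α ξ : ι → ℝ}

lemma sum_Icc_sum_le_sum_rpow (hα : ∀ j, 1 ≤ α j) (hξ : ∀ j, 0 ≤ ξ j) (L : ℕ) :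
    ∑ l ∈ Icc 1 L, ∑ j, ξ j * (l : ℝ) ^ (α j - 1) ≤ ∑ j, ξ j * (L : ℝ) ^ α j := by
  rw [sum_comm]
  refine sum_le_sum fun j _ => ?_
  rw [← mul_sum]
  exact mul_le_mul_of_nonneg_left (sum_Icc_rpow_sub_one_le (hα j) L) (hξ j)

lemma sum_rpow_le_mul_sum_Icc_sum {c : ℝ} (hα : ∀ j, 1 ≤ α j) (hξ : ∀ j, 0 ≤ ξ j)
    (hc : ∀ j, α j ≤ c) (L : ℕ) :
    ∑ j, ξ j * (L : ℝ) ^ α j ≤ c * ∑ l ∈ Icc 1 L, ∑ j, ξ j * (l : ℝ) ^ (α j - 1) := by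
  rw [sum_comm, mul_sum]
  refine sum_le_sum fun j _ => ?_
  rw [← mul_sum, mul_left_comm]
  exact mul_le_mul_of_nonneg_left (rpow_le_mul_sum_Icc_rpow_sub_one (hα j) (hc j) L) (hξ j)

end Resource

theorem stmt18_general {E : Type*} [Fintype E] [DecidableEq E] {N q : ℕ}
    (α : Fin q → ℝ) (hα : ∀ j, 1 ≤ α j)
    (ξ : E → Fin q → ℝ) (hξ : ∀ e j, 0 < ξ e j)
    (αmax : ℝ) (hub : ∀ j, α j ≤ αmax)
    (a : Fin N → Finset E) :
    bgndPotential α ξ a ≤ ∑ e, ∑ j, ξ e j * (bgndLoad a e : ℝ) ^ (α j) ∧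
    ∑ e, ∑ j, ξ e j * (bgndLoad a e : ℝ) ^ (α j)
      ≤ ((⌈αmax⌉ : ℤ) : ℝ) * bgndPotential α ξ a := by
  have hξ' : ∀ e j, 0 ≤ ξ e j := fun e j => (hξ e j).le
  refine ⟨sum_le_sum fun e _ => sum_Icc_sum_le_sum_rpow hα (hξ' e) _, ?_⟩
  rw [bgndPotential, mul_sum]
  exact sum_le_sum fun e _ => sum_rpow_le_mul_sum_Icc_sum hα (hξ' e)
    (fun j => (hub j).trans (Int.le_ceil αmax)) _

theorem stmt18 {E : Type*} [Fintype E] [DecidableEq E] {N q : ℕ}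
    (α : Fin q → ℝ) (hα : ∀ j, 1 ≤ α j)
    (ξ : E → Fin q → ℝ) (hξ : ∀ e j, 0 < ξ e j)
    (αmax : ℝ) (hub : ∀ j, α j ≤ αmax) (hmem : ∃ j, α j = αmax)
    (a : Fin N → Finset E) :
    bgndPotential α ξ a ≤ ∑ e, ∑ j, ξ e j * (bgndLoad a e : ℝ) ^ (α j) ∧
    ∑ e, ∑ j, ξ e j * (bgndLoad a e : ℝ) ^ (α j)
      ≤ ((⌈αmax⌉ : ℤ) : ℝ) * bgndPotential α ξ a :=
  stmt18_general α hα ξ hξ αmax hub a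
end
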